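/- Let v be a viscosity supersolution of the HJB equation max_{q∈[0,1]} { p[q(1+η)-η]φ_x + φ_s + φ_w + λ(w)∫₀^{x/q} v(s, x-qy, 0) dG(y) - λ(w) v(s,x,w) } ≤ 0 on a domain 𝒟, with boundary conditions v ≥ 1 on {t = T} and on {x ≥ ηp(T-t)}. Define φ^{ς,θ}(t,y,v) := ς/(t+1) + θ(T-t)/t for constants ς, θ > 0. Then v + φ^{ς,θ} is a strict viscosity supersolution: for every test function φ ∈ C¹ touching v + φ^{ς,θ} from below at an interior point, the HJB operator evaluated at that point is at most -ς/(T+1)². -/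

import Mathlib

open MeasureTheory Real Set

/-- The HJB operator `ℒ[u,φ](s,x,w)` with claim-size distribution `ν` (the measure `dG`). -/
noncomputable def hjbOp (p η : ℝ) (lam : ℝ → ℝ) (ν : MeasureTheory.Measure ℝ)
    (u φ : ℝ × ℝ × ℝ → ℝ) (z : ℝ × ℝ × ℝ) : ℝ :=
  ⨆ q : Set.Icc (0:ℝ) 1,
    (p * ((q : ℝ) * (1 + η) - η) * fderiv ℝ φ z (0, 1, 0) +
      fderiv ℝ φ z (1, 0, 0) + fderiv ℝ φ z (0, 0, 1) +
      lam z.2.2 * ∫ y in Set.Ioc (0:ℝ) (z.2.1 / (q : ℝ)), u (z.1, z.2.1 - (q : ℝ) * y, 0) ∂ν -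
      lam z.2.2 * u z)

/-- The open domain `𝒟`. -/
def openDomain (T η p : ℝ) : Set (ℝ × ℝ × ℝ) :=
  {z | 0 < z.1 ∧ z.1 < T ∧ 0 < z.2.1 ∧ z.2.1 < η * p * (T - z.1) ∧ 0 < z.2.2 ∧ z.2.2 < z.1}

/-!
If `φ` touches `v + f(s)` from below, where `f(s) = ς/(s+1) + θ(T-s)/s`, then `φ - f(s)`
touches `v` from below, and the supersolution inequality for `v` transfers to `v + f`: the
`s`-derivative adds `f'(s) ≤ -ς/(T+1)²`, and the jump term adds `λ(w)(ν(0, x/q] - 1) f(s) ≤ 0`.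
As `f` blows up at `s = 0`, `φ - f(s)` is not a `C¹` test function on all of `ℝ³`; `f` is
therefore replaced by a `C¹` function that agrees with `f` near `s` and is at least `min f M`,
with `M` a bound of `φ - v` on the bounded domain.
-/

open Filter Topology

noncomputable def perturbation (T ς θ s : ℝ) : ℝ := ς / (s + 1) + θ * (T - s) / s

section Perturbation

variable {T ς θ : ℝ}

lemma perturbation_eq_of_ne_zero {s : ℝ} (hs : s ≠ 0) :
    perturbation T ς θ s = ς / (s + 1) + θ * T * s⁻¹ - θ := by
  unfold perturbation; field_simp; ring

lemma tendsto_perturbation_nhdsGT_zero (hθT : 0 < θ * T) :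
    Tendsto (perturbation T ς θ) (𝓝[>] 0) atTop := by
  have hbdd : Tendsto (fun s : ℝ => ς / (s + 1) - θ) (𝓝[>] 0) (𝓝 (ς / (0 + 1) - θ)) :=
    ((continuousAt_const.div (continuousAt_id.add continuousAt_const) (by norm_num)).sub
      continuousAt_const).tendsto.mono_left nhdsWithin_le_nhds
  refine (hbdd.add_atTop (tendsto_inv_nhdsGT_zero.const_mul_atTop hθT)).congr' ?_
  filter_upwards [self_mem_nhdsWithin] with s hs
  rw [perturbation_eq_of_ne_zero (ne_of_gt hs)]
  ring

lemma perturbation_antitoneOn (hς : 0 ≤ ς) (hθT : 0 ≤ θ * T) :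
    AntitoneOn (perturbation T ς θ) (Ioi 0) := by
  intro s hs t ht hst
  rw [perturbation_eq_of_ne_zero (ne_of_gt ht), perturbation_eq_of_ne_zero (ne_of_gt hs)]
  have h1 : ς / (t + 1) ≤ ς / (s + 1) :=
    div_le_div_of_nonneg_left hς (by linarith [mem_Ioi.mp hs]) (by linarith)
  have h2 : θ * T * t⁻¹ ≤ θ * T * s⁻¹ :=
    mul_le_mul_of_nonneg_left (inv_anti₀ hs hst) hθT
  linarith

lemma contDiffOn_perturbation {n : WithTop ℕ∞} :
    ContDiffOn ℝ n (perturbation T ς θ) (Ioi 0) :=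
  (contDiffOn_const.div (contDiffOn_id.add contDiffOn_const)
      (fun s (hs : 0 < s) => by simp only [id]; linarith)).add
    ((contDiffOn_const.mul (contDiffOn_const.sub contDiffOn_id)).div contDiffOn_id
      (fun s (hs : 0 < s) => ne_of_gt hs))

lemma hasDerivAt_perturbation {t : ℝ} (ht : 0 < t) :
    HasDerivAt (perturbation T ς θ) (-(ς / (t + 1) ^ 2) - θ * T / t ^ 2) t := by
  have h : HasDerivAt (fun s : ℝ => ς * (s + 1)⁻¹ + θ * T * s⁻¹ - θ)
      (ς * (-1 / (t + 1) ^ 2) + θ * T * (-(t ^ 2)⁻¹)) t :=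
    ((((hasDerivAt_id t).add_const 1).inv (by simp only [id]; linarith)).const_mul ς |>.add
      ((hasDerivAt_inv (ne_of_gt ht)).const_mul (θ * T))).sub_const θ
  refine (h.congr_of_eventuallyEq ?_).congr_deriv (by ring)
  filter_upwards [Ioi_mem_nhds ht] with s (hs : 0 < s)
  rw [perturbation_eq_of_ne_zero (ne_of_gt hs), div_eq_mul_inv]

lemma perturbation_nonneg (hς : 0 ≤ ς) (hθ : 0 ≤ θ) {s : ℝ} (hs : 0 < s) (hsT : s ≤ T) :
    0 ≤ perturbation T ς θ s :=
  add_nonneg (div_nonneg hς (by linarith)) (div_nonneg (mul_nonneg hθ (by linarith)) hs.le)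

lemma deriv_perturbation_le (hς : 0 ≤ ς) (hθ : 0 ≤ θ) {t : ℝ} (ht : 0 < t) (htT : t ≤ T) :
    deriv (perturbation T ς θ) t ≤ -ς / (T + 1) ^ 2 := by
  have h1 : ς / (T + 1) ^ 2 ≤ ς / (t + 1) ^ 2 :=
    div_le_div_of_nonneg_left hς (by positivity) (by gcongr)
  have h2 : 0 ≤ θ * T / t ^ 2 := div_nonneg (mul_nonneg hθ (by linarith)) (sq_nonneg t)
  rw [(hasDerivAt_perturbation ht).deriv, neg_div]
  linarith

end Perturbation

noncomputable def smoothFloor (a b t : ℝ) : ℝ :=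
  a + (t - a) * smoothTransition ((t - a) / (b - a))

section SmoothFloor

variable {a b : ℝ}

lemma contDiff_smoothFloor {n : ℕ∞} : ContDiff ℝ n (smoothFloor a b) :=
  contDiff_const.add ((contDiff_id.sub contDiff_const).mul
    (smoothTransition.contDiff.comp ((contDiff_id.sub contDiff_const).div_const _)))

lemma le_smoothFloor (hab : a < b) (t : ℝ) : a ≤ smoothFloor a b t := by
  unfold smoothFloor
  rcases le_total t a with h | h
  · rw [smoothTransition.zero_of_nonpos (div_nonpos_of_nonpos_of_nonneg (by linarith)
      (by linarith))]
    simp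
  · nlinarith [smoothTransition.nonneg ((t - a) / (b - a))]

lemma smoothFloor_le {t : ℝ} (h : a ≤ t) : smoothFloor a b t ≤ t := by
  unfold smoothFloor
  nlinarith [smoothTransition.le_one ((t - a) / (b - a))]

lemma smoothFloor_of_le (hab : a < b) {t : ℝ} (h : t ≤ a) : smoothFloor a b t = a := by
  rw [smoothFloor, smoothTransition.zero_of_nonpos
    (div_nonpos_of_nonpos_of_nonneg (by linarith) (by linarith))]
  ring

lemma smoothFloor_of_ge (hab : a < b) {t : ℝ} (h : b ≤ t) : smoothFloor a b t = t := by
  rw [smoothFloor, smoothTransition.one_of_one_le (by rw [le_div_iff₀ (by linarith)]; linarith)]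
  ring

end SmoothFloor

lemma exists_contDiff_eventuallyEq_min_le {f : ℝ → ℝ} (hf : ContDiffOn ℝ 1 f (Ioi 0))
    (hanti : AntitoneOn f (Ioi 0)) (htop : Tendsto f (𝓝[>] 0) atTop) {t : ℝ} (ht : 0 < t)
    (M : ℝ) : ∃ g : ℝ → ℝ, ContDiff ℝ 1 g ∧ g =ᶠ[𝓝 t] f ∧ ∀ s, 0 < s → min (f s) M ≤ g s := by
  obtain ⟨a, hMa, ha0, hat⟩ :=
    ((htop.eventually_ge_atTop M).and (Ioo_mem_nhdsGT ht)).exists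
  have hab : a < (a + t) / 2 := by linarith
  have hpos : ∀ s, smoothFloor a ((a + t) / 2) s ∈ Ioi 0 :=
    fun s => ha0.trans_le (le_smoothFloor hab s)
  refine ⟨f ∘ smoothFloor a ((a + t) / 2), hf.comp_contDiff contDiff_smoothFloor hpos, ?_, ?_⟩
  · filter_upwards [Ioi_mem_nhds (show (a + t) / 2 < t by linarith)] with s hs
    simp only [Function.comp_apply, smoothFloor_of_ge hab (le_of_lt hs)]
  · intro s hs
    rcases le_total a s with has | hsa
    · exact min_le_of_left_le (hanti (hpos s) hs (smoothFloor_le has))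
    · simp only [Function.comp_apply, smoothFloor_of_le hab hsa]
      exact min_le_of_right_le hMa

noncomputable def hjbTerm (p η : ℝ) (lam : ℝ → ℝ) (ν : Measure ℝ) (u φ : ℝ × ℝ × ℝ → ℝ)
    (z : ℝ × ℝ × ℝ) (q : ℝ) : ℝ :=
  p * (q * (1 + η) - η) * fderiv ℝ φ z (0, 1, 0) +
    fderiv ℝ φ z (1, 0, 0) + fderiv ℝ φ z (0, 0, 1) +
    lam z.2.2 * ∫ y in Ioc (0:ℝ) (z.2.1 / q), u (z.1, z.2.1 - q * y, 0) ∂ν -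
    lam z.2.2 * u z

lemma sub_mul_mem_Icc_of_mem_Ioc {x q y : ℝ} (hq : 0 ≤ q) (hy : y ∈ Ioc 0 (x / q)) :
    x - q * y ∈ Icc 0 x := by
  obtain ⟨hy0, hyx⟩ := hy
  rcases hq.eq_or_lt with rfl | hq
  · rw [div_zero] at hyx; linarith
  · have : q * y ≤ x := (le_div_iff₀' hq).mp hyx
    constructor <;> nlinarith

section HJB

variable {p η : ℝ} {lam : ℝ → ℝ} {ν : Measure ℝ} {u φ : ℝ × ℝ × ℝ → ℝ} {z : ℝ × ℝ × ℝ}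

lemma hjbOp_le {c : ℝ} (h : ∀ q ∈ Icc (0:ℝ) 1, hjbTerm p η lam ν u φ z q ≤ c) :
    hjbOp p η lam ν u φ z ≤ c :=
  have : Nonempty (Icc (0:ℝ) 1) := ⟨⟨0, left_mem_Icc.mpr zero_le_one⟩⟩
  ciSup_le fun q => h q q.2

variable [IsFiniteMeasure ν]

lemma integrableOn_slice {f : ℝ → ℝ} (hf : Continuous f) (x q : ℝ) :
    IntegrableOn (fun y => f (x - q * y)) (Ioc 0 (x / q)) ν :=
  ((hf.comp (continuous_const.sub (continuous_const.mul continuous_id))).continuousOn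
    |>.integrableOn_compact isCompact_Icc).mono_set Ioc_subset_Icc_self

lemma bddAbove_range_hjbTerm (hu : Continuous u) :
    BddAbove (range fun q : Icc (0:ℝ) 1 => hjbTerm p η lam ν u φ z q) := by
  obtain ⟨A, hA⟩ := (isCompact_Icc (a := (0:ℝ)) (b := 1)).bddAbove_image (f := fun q : ℝ =>
    p * (q * (1 + η) - η) * fderiv ℝ φ z (0, 1, 0)) (by fun_prop : Continuous _).continuousOn
  obtain ⟨C, hC⟩ := isCompact_Icc.exists_bound_of_continuousOn (s := Icc 0 z.2.1)
    (f := fun s => u (z.1, s, 0)) (by fun_prop : Continuous _).continuousOn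
  refine ⟨A + fderiv ℝ φ z (1, 0, 0) + fderiv ℝ φ z (0, 0, 1) + |lam z.2.2| * (|C| * ν.real univ)
    - lam z.2.2 * u z, ?_⟩
  rintro _ ⟨⟨q, hq⟩, rfl⟩
  have hint : ‖∫ y in Ioc (0:ℝ) (z.2.1 / q), u (z.1, z.2.1 - q * y, 0) ∂ν‖
      ≤ |C| * ν.real univ :=
    calc _ ≤ C * ν.real (Ioc (0:ℝ) (z.2.1 / q)) := norm_setIntegral_le_of_norm_le_const
          (measure_lt_top ν _) fun y hy => hC _ (sub_mul_mem_Icc_of_mem_Ioc hq.1 hy)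
      _ ≤ |C| * ν.real univ :=
          mul_le_mul (le_abs_self C) (measureReal_mono (subset_univ _)) measureReal_nonneg
            (abs_nonneg C)
  have hjump := (le_abs_self _).trans
    ((abs_mul (lam z.2.2) _).trans_le (mul_le_mul_of_nonneg_left hint (abs_nonneg _)))
  have := hA (mem_image_of_mem _ hq)
  simp only [hjbTerm]
  linarith

lemma hjbTerm_le_hjbOp (hu : Continuous u) {q : ℝ} (hq : q ∈ Icc (0:ℝ) 1) :
    hjbTerm p η lam ν u φ z q ≤ hjbOp p η lam ν u φ z :=
  le_ciSup (f := fun q : Icc (0:ℝ) 1 => hjbTerm p η lam ν u φ z q)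
    (bddAbove_range_hjbTerm hu) ⟨q, hq⟩

lemma hjbTerm_add_comp_fst (hu : Continuous u) (hφ : DifferentiableAt ℝ φ z) {g : ℝ → ℝ}
    {d : ℝ} (hg : HasDerivAt g d z.1) (c : ℝ → ℝ) (q : ℝ) :
    hjbTerm p η lam ν (fun z' => u z' + c z'.1) φ z q =
      hjbTerm p η lam ν u (fun z' => φ z' - g z'.1) z q + d +
        lam z.2.2 * (ν.real (Ioc 0 (z.2.1 / q)) - 1) * c z.1 := by
  have hfderiv : fderiv ℝ (fun z' => φ z' - g z'.1) z =
      fderiv ℝ φ z - (ContinuousLinearMap.smulRight (1 : ℝ →L[ℝ] ℝ) d).comp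
        (ContinuousLinearMap.fst ℝ ℝ (ℝ × ℝ)) :=
    (hφ.hasFDerivAt.sub (hg.hasFDerivAt.comp z hasFDerivAt_fst)).fderiv
  have hint : ∫ y in Ioc (0:ℝ) (z.2.1 / q), (u (z.1, z.2.1 - q * y, 0) + c z.1) ∂ν =
      (∫ y in Ioc (0:ℝ) (z.2.1 / q), u (z.1, z.2.1 - q * y, 0) ∂ν) +
        ν.real (Ioc 0 (z.2.1 / q)) * c z.1 := by
    rw [integral_add (integrableOn_slice (f := fun s => u (z.1, s, 0)) (by fun_prop) _ _)
      (integrableOn_const (measure_lt_top ν _).ne), setIntegral_const, smul_eq_mul]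
  simp [hjbTerm, hfderiv, hint]
  ring

end HJB

lemma openDomain_subset_Icc (T η p : ℝ) :
    openDomain T η p ⊆ Icc 0 (T, η * p * T, T) := by
  rintro ⟨s, x, w⟩ ⟨hs0, hsT, hx0, hxT, hw0, hws⟩
  refine ⟨⟨hs0.le, hx0.le, hw0.le⟩, hsT.le, ?_, by linarith⟩
  show x ≤ η * p * T
  nlinarith

theorem strict_supersolution_perturbation_general
    (T p η ς θ : ℝ) (hς : 0 < ς) (hθ : 0 < θ)
    (lam : ℝ → ℝ)
    (hlampos : ∀ t ∈ Set.Icc (0:ℝ) T, 0 < lam t)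
    (ν : MeasureTheory.Measure ℝ) [MeasureTheory.IsProbabilityMeasure ν]
    (v : ℝ × ℝ × ℝ → ℝ) (hvcont : Continuous v)
    -- v is a viscosity supersolution on 𝒟:
    (hsuper : ∀ z ∈ openDomain T η p, ∀ φ : ℝ × ℝ × ℝ → ℝ, ContDiff ℝ 1 φ →
      v z = φ z → (∀ z' ∈ openDomain T η p, φ z' ≤ v z') →
      hjbOp p η lam ν v φ z ≤ 0) :
    -- then v + φ^{ς,θ} is a strict viscosity supersolution:
    ∀ z ∈ openDomain T η p, ∀ φ : ℝ × ℝ × ℝ → ℝ, ContDiff ℝ 1 φ →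
      v z + (ς / (z.1 + 1) + θ * (T - z.1) / z.1) = φ z →
      (∀ z' ∈ openDomain T η p, φ z' ≤ v z' + (ς / (z'.1 + 1) + θ * (T - z'.1) / z'.1)) →
      hjbOp p η lam ν (fun z' => v z' + (ς / (z'.1 + 1) + θ * (T - z'.1) / z'.1)) φ z
        ≤ -ς / (T + 1) ^ 2 := by
  intro z hz φ hφ htouch hbelow
  change v z + perturbation T ς θ z.1 = φ z at htouch
  change ∀ z' ∈ _, φ z' ≤ v z' + perturbation T ς θ z'.1 at hbelow
  change hjbOp p η lam ν (fun z' => v z' + perturbation T ς θ z'.1) φ z ≤ _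
  have ⟨ht0, htT, _, _, hw0, hwt⟩ := hz
  have hθT : 0 < θ * T := mul_pos hθ (ht0.trans htT)
  obtain ⟨M, hM⟩ := (isCompact_Icc.bddAbove_image (hφ.continuous.sub hvcont).continuousOn).mono
    (image_mono (openDomain_subset_Icc T η p))
  obtain ⟨g, hg, hgf, hgmin⟩ := exists_contDiff_eventuallyEq_min_le contDiffOn_perturbation
    (perturbation_antitoneOn hς.le hθT.le) (tendsto_perturbation_nhdsGT_zero hθT) ht0 M
  have hgd :=
    (hasDerivAt_perturbation ht0).differentiableAt.hasDerivAt.congr_of_eventuallyEq hgf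
  -- `g` is the perturbation near `z.1` and dominates `φ - v` elsewhere, so `φ - g` tests `v`.
  have hψ : hjbOp p η lam ν v (fun z' => φ z' - g z'.1) z ≤ 0 := by
    refine hsuper z hz _ (hφ.sub (hg.comp contDiff_fst)) ?_ fun z' hz' => ?_
    · rw [hgf.eq_of_nhds, ← htouch, add_sub_cancel_right]
    · have := le_min (sub_le_iff_le_add'.mpr (hbelow z' hz')) (hM (mem_image_of_mem _ hz'))
      linarith [hgmin z'.1 hz'.1]
  refine hjbOp_le fun q hq => ?_
  rw [hjbTerm_add_comp_fst (c := perturbation T ς θ) hvcont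
    (hφ.differentiable one_ne_zero z) hgd]
  have hjump : lam z.2.2 * (ν.real (Ioc 0 (z.2.1 / q)) - 1) * perturbation T ς θ z.1 ≤ 0 :=
    mul_nonpos_of_nonpos_of_nonneg
      (mul_nonpos_of_nonneg_of_nonpos (hlampos _ ⟨hw0.le, by linarith⟩).le
        (sub_nonpos.mpr measureReal_le_one))
      (perturbation_nonneg hς.le hθ.le ht0 htT.le)
  linarith [(hjbTerm_le_hjbOp hvcont hq).trans hψ, deriv_perturbation_le hς.le hθ.le ht0 htT.le]

theorem strict_supersolution_perturbation
    (T p η ς θ : ℝ) (hT : 0 < T) (hp : 0 < p) (hη : 0 < η) (hς : 0 < ς) (hθ : 0 < θ)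
    (lam : ℝ → ℝ) (hlam : ContinuousOn lam (Set.Icc 0 T))
    (hlampos : ∀ t ∈ Set.Icc (0:ℝ) T, 0 < lam t)
    (ν : MeasureTheory.Measure ℝ) [MeasureTheory.IsProbabilityMeasure ν]
    (v : ℝ × ℝ × ℝ → ℝ) (hvcont : Continuous v)
    -- v is a viscosity supersolution on 𝒟:
    (hsuper : ∀ z ∈ openDomain T η p, ∀ φ : ℝ × ℝ × ℝ → ℝ, ContDiff ℝ 1 φ →
      v z = φ z → (∀ z' ∈ openDomain T η p, φ z' ≤ v z') →
      hjbOp p η lam ν v φ z ≤ 0)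
    -- boundary conditions v ≥ 1 on {t = T} and on {x ≥ ηp(T-t)}:
    (hbT : ∀ z : ℝ × ℝ × ℝ, z.1 = T → 1 ≤ v z)
    (hbx : ∀ z : ℝ × ℝ × ℝ, η * p * (T - z.1) ≤ z.2.1 → 1 ≤ v z) :
    -- then v + φ^{ς,θ} is a strict viscosity supersolution:
    ∀ z ∈ openDomain T η p, ∀ φ : ℝ × ℝ × ℝ → ℝ, ContDiff ℝ 1 φ →
      v z + (ς / (z.1 + 1) + θ * (T - z.1) / z.1) = φ z →
      (∀ z' ∈ openDomain T η p, φ z' ≤ v z' + (ς / (z'.1 + 1) + θ * (T - z'.1) / z'.1)) →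
      hjbOp p η lam ν (fun z' => v z' + (ς / (z'.1 + 1) + θ * (T - z'.1) / z'.1)) φ z
        ≤ -ς / (T + 1) ^ 2 :=
  strict_supersolution_perturbation_general T p η ς θ hς hθ lam hlampos ν v hvcont hsuper
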